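/- If a graph G ∈ G(n) is not a forest (contains a cycle), then in the algebra B_H(n) (the CDBA model with generators g_{ij}, h_{ij} and the relations in the ideal J, including g_{ij}² = 0, the 3-term relations for g and for h, and (h_{ij} + h_{ki})g_{jk} − (h_{ij} + h_{jk})g_{ki} = 0), the monomial g_G h_H vanishes whenever the union GH contains a cycle. -/
import Mathlib


open scoped Classical

/-- Generators of the algebra `B_H(n)`: `inl e` is the generator `g_e` of bidegree
`(-1, d)` (total degree `d - 1`), `inr e` is the generator `h_e` of bidegree
`(-1, 2d - 1)` (total degree `2d - 2`). -/
abbrev BGen (n : ℕ) := (Fin n × Fin n) ⊕ (Fin n × Fin n)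

/-- Total degrees of the generators. -/
def bDeg (d : ℕ) : BGen n → ℕ := Sum.elim (fun _ => d - 1) (fun _ => 2 * d - 2)

/-- The (purely combinatorial) relations of the algebra `B_H(n)`: graded
commutativity, `g_{ij}² = h_{ij}² = 0`, `g_{ii} = h_{ii} = 0`, `g_{ji} = g_{ij}`,
`h_{ji} = -h_{ij}`, the 3-term relations for the `g`'s and for the `h`'s, and the
mixed relation `(h_{ij} + h_{ki}) g_{jk} - (h_{ij} + h_{jk}) g_{ki} = 0`. -/
inductive BRel (k : Type*) [CommRing k] (d n : ℕ) :
    FreeAlgebra k (BGen n) → FreeAlgebra k (BGen n) → Prop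
  | comm (x y : BGen n) :
      BRel k d n (FreeAlgebra.ι k x * FreeAlgebra.ι k y)
        (((-1 : k) ^ (bDeg d x * bDeg d y)) • (FreeAlgebra.ι k y * FreeAlgebra.ι k x))
  | gsq (e : Fin n × Fin n) :
      BRel k d n (FreeAlgebra.ι k (Sum.inl e) * FreeAlgebra.ι k (Sum.inl e)) 0
  | hsq (e : Fin n × Fin n) :
      BRel k d n (FreeAlgebra.ι k (Sum.inr e) * FreeAlgebra.ι k (Sum.inr e)) 0
  | gdiag (i : Fin n) : BRel k d n (FreeAlgebra.ι k (Sum.inl (i, i))) 0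
  | hdiag (i : Fin n) : BRel k d n (FreeAlgebra.ι k (Sum.inr (i, i))) 0
  | gsymm (i j : Fin n) :
      BRel k d n (FreeAlgebra.ι k (Sum.inl (j, i))) (FreeAlgebra.ι k (Sum.inl (i, j)))
  | hsymm (i j : Fin n) :
      BRel k d n (FreeAlgebra.ι k (Sum.inr (j, i))) (-(FreeAlgebra.ι k (Sum.inr (i, j))))
  | gthree (i j l : Fin n) :
      BRel k d n
        (FreeAlgebra.ι k (Sum.inl (i, j)) * FreeAlgebra.ι k (Sum.inl (j, l))
          + FreeAlgebra.ι k (Sum.inl (j, l)) * FreeAlgebra.ι k (Sum.inl (l, i))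
          + FreeAlgebra.ι k (Sum.inl (l, i)) * FreeAlgebra.ι k (Sum.inl (i, j))) 0
  | hthree (i j l : Fin n) :
      BRel k d n
        (FreeAlgebra.ι k (Sum.inr (i, j)) * FreeAlgebra.ι k (Sum.inr (j, l))
          + FreeAlgebra.ι k (Sum.inr (j, l)) * FreeAlgebra.ι k (Sum.inr (l, i))
          + FreeAlgebra.ι k (Sum.inr (l, i)) * FreeAlgebra.ι k (Sum.inr (i, j))) 0
  | mix (i j l : Fin n) :
      BRel k d n
        ((FreeAlgebra.ι k (Sum.inr (i, j)) + FreeAlgebra.ι k (Sum.inr (l, i)))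
            * FreeAlgebra.ι k (Sum.inl (j, l))
          - (FreeAlgebra.ι k (Sum.inr (i, j)) + FreeAlgebra.ι k (Sum.inr (j, l)))
            * FreeAlgebra.ι k (Sum.inl (l, i))) 0

/-- The combinatorial part of the algebra `B_H(n)`. -/
abbrev BAlg (k : Type*) [CommRing k] (d n : ℕ) := RingQuot (BRel k d n)

/-- The generator `g_e` of `BAlg`. -/
def gB (k : Type*) [CommRing k] (d n : ℕ) (e : Fin n × Fin n) : BAlg k d n :=
  RingQuot.mkAlgHom k (BRel k d n) (FreeAlgebra.ι k (Sum.inl e))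

/-- The generator `h_e` of `BAlg`. -/
def hB (k : Type*) [CommRing k] (d n : ℕ) (e : Fin n × Fin n) : BAlg k d n :=
  RingQuot.mkAlgHom k (BRel k d n) (FreeAlgebra.ι k (Sum.inr e))

/-- The monomial `g_G`, product of the `g`-generators of the edges of `G` in
lexicographic order. -/
noncomputable def gBMonomial (k : Type*) [CommRing k] (d n : ℕ)
    (G : Finset (Lex (Fin n × Fin n))) : BAlg k d n :=
  ((G.sort (· ≤ ·)).map (fun e => gB k d n (ofLex e))).prod

/-- The monomial `h_H`, product of the `h`-generators of the edges of `H` in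
lexicographic order. -/
noncomputable def hBMonomial (k : Type*) [CommRing k] (d n : ℕ)
    (H : Finset (Lex (Fin n × Fin n))) : BAlg k d n :=
  ((H.sort (· ≤ ·)).map (fun e => hB k d n (ofLex e))).prod

/-- The simple graph on `{1,…,n}` determined by an edge set. -/
def graphOf (n : ℕ) (G : Finset (Lex (Fin n × Fin n))) : SimpleGraph (Fin n) :=
  SimpleGraph.fromRel (fun a b => toLex (a, b) ∈ G ∨ toLex (b, a) ∈ G)

/-! ### Auxiliary material -/

namespace Stmt15Aux

variable {k : Type*} [CommRing k] {d n : ℕ}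

/-- The atom of a labelled oriented edge. -/
def atomB {n : ℕ} : Bool × Fin n × Fin n → BGen n
  | (true, e) => Sum.inl e
  | (false, e) => Sum.inr e

/-- The generator of `BAlg` for a labelled oriented edge. -/
def genB (k : Type*) [CommRing k] (d n : ℕ) (p : Bool × Fin n × Fin n) : BAlg k d n :=
  RingQuot.mkAlgHom k (BRel k d n) (FreeAlgebra.ι k (atomB p))

@[simp] lemma genB_true (e : Fin n × Fin n) : genB k d n (true, e) = gB k d n e := rfl
@[simp] lemma genB_false (e : Fin n × Fin n) : genB k d n (false, e) = hB k d n e := rfl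

@[simp] lemma mk_inl (e : Fin n × Fin n) :
    RingQuot.mkAlgHom k (BRel k d n) (FreeAlgebra.ι k (Sum.inl e)) = gB k d n e := rfl
@[simp] lemma mk_inr (e : Fin n × Fin n) :
    RingQuot.mkAlgHom k (BRel k d n) (FreeAlgebra.ι k (Sum.inr e)) = hB k d n e := rfl

lemma relQ {x y : FreeAlgebra k (BGen n)} (h : BRel k d n x y) :
    RingQuot.mkAlgHom k (BRel k d n) x = RingQuot.mkAlgHom k (BRel k d n) y :=
  RingQuot.mkAlgHom_rel _ h

/-- A sign. -/
def Sgn (s : k) : Prop := s = 1 ∨ s = -1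

lemma Sgn.one : Sgn (1 : k) := Or.inl rfl

lemma Sgn.mul {s t : k} (hs : Sgn s) (ht : Sgn t) : Sgn (s * t) := by
  rcases hs with rfl | rfl <;> rcases ht with rfl | rfl <;> simp [Sgn]

lemma Sgn.cancel {s : k} (hs : Sgn s) {M : Type*} [AddCommGroup M] [Module k M]
    {X Y : M} (h : X = s • Y) (hX : X = 0) : Y = 0 := by
  rcases hs with rfl | rfl
  · rw [one_smul] at h; rw [← h, hX]
  · rw [neg_smul, one_smul] at h
    rw [hX] at h
    exact neg_eq_zero.mp h.symm

lemma comm_genB (p q : Bool × Fin n × Fin n) :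
    genB k d n p * genB k d n q
      = ((-1 : k) ^ (bDeg d (atomB p) * bDeg d (atomB q))) • (genB k d n q * genB k d n p) := by
  have h := relQ (k := k) (d := d) (BRel.comm (atomB p) (atomB q))
  simpa [genB, map_mul] using h

lemma commScale (p q : Bool × Fin n × Fin n) :
    ∃ s : k, Sgn s ∧ genB k d n p * genB k d n q = s • (genB k d n q * genB k d n p) :=
  ⟨_, neg_one_pow_eq_or k _, comm_genB p q⟩

lemma gB_symm (i j : Fin n) : gB k d n (j, i) = gB k d n (i, j) := by
  simpa using relQ (k := k) (d := d) (BRel.gsymm i j)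

lemma hB_symm' (i j : Fin n) : hB k d n (j, i) + hB k d n (i, j) = 0 := by
  have h := relQ (k := k) (d := d) (BRel.hsymm i j)
  simp only [map_neg, mk_inr] at h
  rw [h]
  exact neg_add_cancel _

lemma gB_sq (e : Fin n × Fin n) : gB k d n e * gB k d n e = 0 := by
  simpa [map_mul] using relQ (k := k) (d := d) (BRel.gsq e)

lemma hB_sq (e : Fin n × Fin n) : hB k d n e * hB k d n e = 0 := by
  simpa [map_mul] using relQ (k := k) (d := d) (BRel.hsq e)

lemma gB_diag (i : Fin n) : gB k d n (i, i) = 0 := by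
  simpa using relQ (k := k) (d := d) (BRel.gdiag i)

lemma hB_diag (i : Fin n) : hB k d n (i, i) = 0 := by
  simpa using relQ (k := k) (d := d) (BRel.hdiag i)

lemma gthreeQ (i j l : Fin n) :
    gB k d n (i, j) * gB k d n (j, l) + gB k d n (j, l) * gB k d n (l, i)
      + gB k d n (l, i) * gB k d n (i, j) = 0 := by
  simpa [map_mul, map_add] using relQ (k := k) (d := d) (BRel.gthree i j l)

lemma hthreeQ (i j l : Fin n) :
    hB k d n (i, j) * hB k d n (j, l) + hB k d n (j, l) * hB k d n (l, i)
      + hB k d n (l, i) * hB k d n (i, j) = 0 := by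
  simpa [map_mul, map_add] using relQ (k := k) (d := d) (BRel.hthree i j l)

lemma mixQ (i j l : Fin n) :
    hB k d n (i, j) * gB k d n (j, l) + hB k d n (l, i) * gB k d n (j, l)
      - hB k d n (i, j) * gB k d n (l, i) - hB k d n (j, l) * gB k d n (l, i) = 0 := by
  have h := relQ (k := k) (d := d) (BRel.mix i j l)
  simp only [map_sub, map_mul, map_add, map_zero, mk_inl, mk_inr] at h
  rw [add_mul, add_mul, sub_add_eq_sub_sub] at h
  exact h

/-- The derived relation `h_e g_e = 0`. -/
lemma hg_same (i j : Fin n) : hB k d n (i, j) * gB k d n (j, i) = 0 := by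
  have h := mixQ (k := k) (d := d) i j i
  rw [hB_diag, gB_diag] at h
  simpa using h

lemma pairQ (t0 t1 : Bool) (x y : Fin n) :
    genB k d n (t0, x, y) * genB k d n (t1, y, x) = 0 := by
  cases t0 <;> cases t1 <;> simp only [genB_true, genB_false]
  · -- h h
    have h : hB k d n (x, y) * (hB k d n (y, x) + hB k d n (x, y)) = 0 := by
      rw [hB_symm' x y, mul_zero]
    rw [mul_add, hB_sq, add_zero] at h
    exact h
  · -- h g
    exact hg_same x y
  · -- g h
    obtain ⟨t, ht, hc2⟩ := commScale (k := k) (d := d) (true, (x, y)) (false, (y, x))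
    simp only [genB_true, genB_false] at hc2
    rw [hc2, hg_same y x, smul_zero]
  · -- g g
    rw [gB_symm x y, gB_sq]

lemma key2b (p q : Bool × Fin n × Fin n) (z : BAlg k d n)
    (h : genB k d n p * z = 0) : genB k d n p * (genB k d n q * z) = 0 := by
  obtain ⟨s, hs, hc⟩ := commScale (k := k) (d := d) p q
  rw [← mul_assoc, hc, smul_mul_assoc, mul_assoc, h, mul_zero, smul_zero]

/-- The inductive step relation. -/
lemma stepQ (i j l : Fin n) (t0 t1 : Bool) (z : BAlg k d n)
    (hz : ∀ s : Bool, genB k d n (s, l, i) * z = 0) :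
    genB k d n (t0, i, j) * (genB k d n (t1, j, l) * z) = 0 := by
  have hzg : gB k d n (l, i) * z = 0 := by simpa using hz true
  have hzh : hB k d n (l, i) * z = 0 := by simpa using hz false
  have hzg' : gB k d n (i, l) * z = 0 := by rw [gB_symm l i]; exact hzg
  have hzh' : hB k d n (i, l) * z = 0 := by
    have h : (hB k d n (i, l) + hB k d n (l, i)) * z = 0 := by
      rw [hB_symm' l i, zero_mul]
    rw [add_mul, hzh, add_zero] at h
    exact h
  cases t0 <;> cases t1 <;> simp only [genB_true, genB_false]
  · -- h h : use hthreeQ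
    have h0 : (hB k d n (i, j) * hB k d n (j, l) + hB k d n (j, l) * hB k d n (l, i)
        + hB k d n (l, i) * hB k d n (i, j)) * z = 0 := by rw [hthreeQ, zero_mul]
    rw [add_mul, add_mul, mul_assoc, mul_assoc, mul_assoc, hzh, mul_zero, add_zero] at h0
    have h3 : hB k d n (l, i) * (hB k d n (i, j) * z) = 0 := by
      have := key2b (k := k) (d := d) (false, (l, i)) (false, (i, j)) z (by simpa using hzh)
      simpa using this
    rw [h3, add_zero] at h0
    exact h0
  · -- h g : use mixQ i j l
    have h0 : (hB k d n (i, j) * gB k d n (j, l) + hB k d n (l, i) * gB k d n (j, l)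
        - hB k d n (i, j) * gB k d n (l, i) - hB k d n (j, l) * gB k d n (l, i)) * z = 0 := by
      rw [mixQ, zero_mul]
    rw [sub_mul, sub_mul, add_mul, mul_assoc, mul_assoc, mul_assoc, mul_assoc,
      hzg, mul_zero, mul_zero, sub_zero, sub_zero] at h0
    have h2 : hB k d n (l, i) * (gB k d n (j, l) * z) = 0 := by
      have := key2b (k := k) (d := d) (false, (l, i)) (true, (j, l)) z (by simpa using hzh)
      simpa using this
    rw [h2, add_zero] at h0
    exact h0
  · -- g h : use mixQ l j i and commutation
    have h0 : (hB k d n (l, j) * gB k d n (j, i) + hB k d n (i, l) * gB k d n (j, i)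
        - hB k d n (l, j) * gB k d n (i, l) - hB k d n (j, i) * gB k d n (i, l)) * z = 0 := by
      rw [mixQ, zero_mul]
    rw [sub_mul, sub_mul, add_mul, mul_assoc, mul_assoc, mul_assoc, mul_assoc,
      hzg', mul_zero, mul_zero, sub_zero, sub_zero] at h0
    have h2 : hB k d n (i, l) * (gB k d n (j, i) * z) = 0 := by
      have := key2b (k := k) (d := d) (false, (i, l)) (true, (j, i)) z (by simpa using hzh')
      simpa using this
    rw [h2, add_zero] at h0
    -- h0 : hB (l,j) * (gB (j,i) * z) = 0
    have h1 : hB k d n (j, l) * (gB k d n (i, j) * z) = 0 := by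
      rw [gB_symm i j] at h0
      have h4 : (hB k d n (j, l) + hB k d n (l, j)) * (gB k d n (j, i) * z) = 0 := by
        rw [hB_symm' l j, zero_mul]
      rw [gB_symm i j] at h4
      rw [add_mul, h0, add_zero] at h4
      exact h4
    obtain ⟨s, hs, hc⟩ := commScale (k := k) (d := d) (true, (i, j)) (false, (j, l))
    simp only [genB_true, genB_false] at hc
    rw [← mul_assoc, hc, smul_mul_assoc, mul_assoc, h1, smul_zero]
  · -- g g : use gthreeQ
    have h0 : (gB k d n (i, j) * gB k d n (j, l) + gB k d n (j, l) * gB k d n (l, i)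
        + gB k d n (l, i) * gB k d n (i, j)) * z = 0 := by rw [gthreeQ, zero_mul]
    rw [add_mul, add_mul, mul_assoc, mul_assoc, mul_assoc, hzg, mul_zero, add_zero] at h0
    have h3 : gB k d n (l, i) * (gB k d n (i, j) * z) = 0 := by
      have := key2b (k := k) (d := d) (true, (l, i)) (true, (i, j)) z (by simpa using hzg)
      simpa using this
    rw [h3, add_zero] at h0
    exact h0

/-! ### Products of lists of generators -/

/-- The product of the generators of a list of labelled oriented edges. -/
noncomputable def genProd (k : Type*) [CommRing k] (d n : ℕ)
    (L : List (Bool × Fin n × Fin n)) : BAlg k d n :=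
  (L.map (genB k d n)).prod

@[simp] lemma genProd_nil : genProd k d n [] = 1 := rfl

@[simp] lemma genProd_cons (x : Bool × Fin n × Fin n) (L : List (Bool × Fin n × Fin n)) :
    genProd k d n (x :: L) = genB k d n x * genProd k d n L := by
  simp [genProd]

lemma genProd_append (L M : List (Bool × Fin n × Fin n)) :
    genProd k d n (L ++ M) = genProd k d n L * genProd k d n M := by
  simp [genProd]

lemma permScale {L L' : List (Bool × Fin n × Fin n)} (h : L.Perm L') :
    ∃ s : k, Sgn s ∧ genProd k d n L = s • genProd k d n L' := by
  induction h with
  | nil => exact ⟨1, Sgn.one, by simp⟩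
  | cons x _ ih =>
      obtain ⟨s, hs, he⟩ := ih
      exact ⟨s, hs, by rw [genProd_cons, genProd_cons, he, mul_smul_comm]⟩
  | swap x y l =>
      obtain ⟨s, hs, hc⟩ := commScale (k := k) (d := d) y x
      refine ⟨s, hs, ?_⟩
      rw [genProd_cons, genProd_cons, genProd_cons, genProd_cons, ← mul_assoc, hc,
        smul_mul_assoc, mul_assoc]
  | trans _ _ ih1 ih2 =>
      obtain ⟨s, hs, he⟩ := ih1
      obtain ⟨t, ht, he2⟩ := ih2
      exact ⟨s * t, hs.mul ht, by rw [he, he2, smul_smul]⟩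

lemma genProd_eq_zero_of_subperm {S T : List (Bool × Fin n × Fin n)}
    (hsp : S.Subperm T) (hS : genProd k d n S = 0) : genProd k d n T = 0 := by
  obtain ⟨l, hl, hsub⟩ := hsp
  have hl0 : genProd k d n l = 0 := by
    obtain ⟨s, hs, he⟩ := permScale (k := k) (d := d) hl
    rw [he, hS, smul_zero]
  obtain ⟨r, hr⟩ := hsub.exists_perm_append
  obtain ⟨s, hs, he⟩ := permScale (k := k) (d := d) hr
  rw [he, genProd_append, hl0, zero_mul, smul_zero]

/-! ### Walks as lists -/

/-- The endpoint of a labelled walk. -/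
def wLast {n : ℕ} : Fin n → List (Bool × Fin n) → Fin n
  | a, [] => a
  | _, (_, b) :: L => wLast b L

/-- The list of labelled oriented edges of a labelled walk. -/
def wEdges {n : ℕ} : Fin n → List (Bool × Fin n) → List (Bool × Fin n × Fin n)
  | _, [] => []
  | a, (t, b) :: L => (t, a, b) :: wEdges b L

lemma wLast_append (a : Fin n) (M : List (Bool × Fin n)) (s : Bool) (x : Fin n) :
    wLast a (M ++ [(s, x)]) = x := by
  induction M generalizing a with
  | nil => rfl
  | cons p M ih => exact ih p.2

lemma wEdges_append (a : Fin n) (M : List (Bool × Fin n)) (s : Bool) (x : Fin n) :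
    wEdges a (M ++ [(s, x)]) = wEdges a M ++ [(s, wLast a M, x)] := by
  induction M generalizing a with
  | nil => rfl
  | cons p M ih =>
      obtain ⟨t, b⟩ := p
      simp [wEdges, wLast, ih b]

lemma symmScale (t : Bool) (x y : Fin n) :
    ∃ s : k, Sgn s ∧ genB k d n (t, x, y) = s • genB k d n (t, y, x) := by
  cases t
  · refine ⟨-1, Or.inr rfl, ?_⟩
    have hadd : hB k d n (x, y) + hB k d n (y, x) = 0 := hB_symm' y x
    have h2 : ((-1 : k) + 1) • hB k d n (y, x) = 0 := by norm_num
    rw [add_smul, one_smul] at h2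
    simp only [genB_false]
    exact add_right_cancel (hadd.trans h2.symm)
  · exact ⟨1, Sgn.one, by rw [one_smul]; exact gB_symm y x⟩

/-- Main lemma: the product of the generators along a closed walk of length at
least two vanishes. -/
lemma mainW : ∀ N : ℕ, ∀ (L : List (Bool × Fin n)) (a : Fin n),
    L.length = N → 2 ≤ N → wLast a L = a → genProd k d n (wEdges a L) = 0 := by
  intro N
  induction N using Nat.strong_induction_on with
  | _ N ih =>
    intro L a hlen h2 hclose
    rcases L with _ | ⟨⟨t0, b⟩, _ | ⟨⟨t1, c⟩, L'⟩⟩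
    · simp at hlen; omega
    · simp at hlen; omega
    rcases L' with _ | ⟨x, L''⟩
    · -- base case: closed walk of length two
      have hc : c = a := hclose
      subst hc
      simp only [wEdges, genProd_cons, genProd_nil, mul_one]
      exact pairQ t0 t1 c b
    · -- inductive step
      have hlenM : (x :: L'').length + 2 = N := by simpa using hlen
      have hwl : wLast c (x :: L'') = a := hclose
      have hzkey : ∀ s : Bool,
          genB k d n (s, c, a) * genProd k d n (wEdges c (x :: L'')) = 0 := by
        intro s
        have hlen' : ((x :: L'') ++ [(s, c)]).length = N - 1 := by
          simp only [List.length_append, List.length_cons, List.length_nil]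
          simp only [List.length_cons] at hlenM
          omega
        have h0 := ih (N - 1) (by omega) ((x :: L'') ++ [(s, c)]) c hlen' (by
          simp only [List.length_cons] at hlenM
          omega) (wLast_append c (x :: L'') s c)
        rw [wEdges_append, hwl] at h0
        have hperm : ((s, (a, c)) :: wEdges c (x :: L'')).Perm
            (wEdges c (x :: L'') ++ [(s, (a, c))]) :=
          (List.perm_append_singleton _ _).symm
        obtain ⟨σ, hσ, he⟩ := permScale (k := k) (d := d) hperm
        have h1 : genB k d n (s, a, c) * genProd k d n (wEdges c (x :: L'')) = 0 := by
          have h5 := he.trans (by rw [h0, smul_zero])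
          rwa [genProd_cons] at h5
        obtain ⟨σ2, hσ2, he2⟩ := symmScale (k := k) (d := d) s c a
        rw [he2, smul_mul_assoc, h1, smul_zero]
      show genProd k d n (wEdges a ((t0, b) :: (t1, c) :: (x :: L''))) = 0
      have hsplit : genProd k d n (wEdges a ((t0, b) :: (t1, c) :: (x :: L'')))
          = genB k d n (t0, a, b) * (genB k d n (t1, b, c)
              * genProd k d n (wEdges c (x :: L''))) := by
        simp only [wEdges, genProd_cons]
      rw [hsplit]
      exact stepQ a b c t0 t1 _ hzkey

/-! ### Canonical orientation -/

/-- Reorient an edge so that the smaller vertex comes first. -/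
def canonE {n : ℕ} (p : Bool × Fin n × Fin n) : Bool × Fin n × Fin n :=
  if p.2.2 < p.2.1 then (p.1, p.2.2, p.2.1) else p

lemma canonScale (p : Bool × Fin n × Fin n) :
    ∃ s : k, Sgn s ∧ genB k d n p = s • genB k d n (canonE p) := by
  obtain ⟨t, u, v⟩ := p
  by_cases h : v < u
  · obtain ⟨s, hs, he⟩ := symmScale (k := k) (d := d) t u v
    exact ⟨s, hs, by simpa [canonE, h] using he⟩
  · exact ⟨1, Sgn.one, by simp [canonE, h]⟩

lemma canonListScale (L : List (Bool × Fin n × Fin n)) :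
    ∃ s : k, Sgn s ∧ genProd k d n L = s • genProd k d n (L.map canonE) := by
  induction L with
  | nil => exact ⟨1, Sgn.one, by simp⟩
  | cons x L ih =>
      obtain ⟨s1, hs1, he1⟩ := canonScale (k := k) (d := d) x
      obtain ⟨s2, hs2, he2⟩ := ih
      refine ⟨s1 * s2, hs1.mul hs2, ?_⟩
      rw [List.map_cons, genProd_cons, genProd_cons, he1, he2, smul_mul_assoc,
        mul_smul_comm, smul_smul]

lemma canonE_sym2 (p : Bool × Fin n × Fin n) :
    s((canonE p).2.1, (canonE p).2.2) = s(p.2.1, p.2.2) := by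
  obtain ⟨t, u, v⟩ := p
  by_cases h : v < u
  · simp [canonE, h, Sym2.eq_swap]
  · simp [canonE, h]

/-! ### From graph walks to labelled walks -/

/-- The labelled walk underlying a graph walk, with labels given by `f`. -/
def toLst {n : ℕ} {Γ : SimpleGraph (Fin n)} (f : Fin n → Fin n → Bool) :
    {u w : Fin n} → Γ.Walk u w → List (Bool × Fin n)
  | _, _, SimpleGraph.Walk.nil => []
  | u, _, SimpleGraph.Walk.cons (v := y) _ q => (f u y, y) :: toLst f q

lemma toLst_last {Γ : SimpleGraph (Fin n)} (f : Fin n → Fin n → Bool)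
    {u w : Fin n} (q : Γ.Walk u w) : wLast u (toLst f q) = w := by
  induction q with
  | nil => rfl
  | cons h q ih => simpa [toLst, wLast] using ih

lemma toLst_length {Γ : SimpleGraph (Fin n)} (f : Fin n → Fin n → Bool)
    {u w : Fin n} (q : Γ.Walk u w) : (toLst f q).length = q.length := by
  induction q with
  | nil => rfl
  | cons h q ih => simpa [toLst] using ih

lemma wEdges_toLst_sym2 {Γ : SimpleGraph (Fin n)} (f : Fin n → Fin n → Bool)
    {u w : Fin n} (q : Γ.Walk u w) :
    (wEdges u (toLst f q)).map (fun e => s(e.2.1, e.2.2)) = q.edges := by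
  induction q with
  | nil => rfl
  | cons h q ih => simpa [toLst, wEdges, SimpleGraph.Walk.edges_cons] using ih

lemma mem_wEdges_toLst {Γ : SimpleGraph (Fin n)} (f : Fin n → Fin n → Bool)
    {u w : Fin n} (q : Γ.Walk u w) :
    ∀ e ∈ wEdges u (toLst f q), Γ.Adj e.2.1 e.2.2 ∧ e.1 = f e.2.1 e.2.2 := by
  induction q with
  | nil => intro e he; simp [toLst, wEdges] at he
  | cons h q ih =>
      intro e he
      simp only [toLst, wEdges, List.mem_cons] at he
      rcases he with rfl | he
      · exact ⟨h, rfl⟩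
      · exact ih e he

end Stmt15Aux

open Stmt15Aux in
/-- In `B_H(n)`, the monomial `g_G h_H` vanishes whenever the union `GH`
contains a cycle (i.e. is not a forest). -/
theorem stmt_15 (k : Type*) [CommRing k] (d n : ℕ)
    (G H : Finset (Lex (Fin n × Fin n)))
    (hG : ∀ e ∈ G, (ofLex e).1 < (ofLex e).2)
    (hH : ∀ e ∈ H, (ofLex e).1 < (ofLex e).2)
    (hdisj : Disjoint G H)
    (hcycle : ¬ (graphOf n (G ∪ H)).IsAcyclic) :
    gBMonomial k d n G * hBMonomial k d n H = 0 := by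
  classical
  have hGH : ∀ e ∈ G ∪ H, (ofLex e).1 < (ofLex e).2 := fun e he =>
    (Finset.mem_union.1 he).elim (hG e) (hH e)
  simp only [SimpleGraph.IsAcyclic, not_forall, not_not] at hcycle
  obtain ⟨v, p, hp⟩ := hcycle
  set f : Fin n → Fin n → Bool :=
    fun a b => if toLex (a ⊓ b, a ⊔ b) ∈ G then true else false with hf
  -- adjacency gives membership of the canonically oriented edge
  have hadj : ∀ {x y : Fin n}, (graphOf n (G ∪ H)).Adj x y →
      x ≠ y ∧ toLex (x ⊓ y, x ⊔ y) ∈ G ∪ H := by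
    intro x y hxy
    rw [graphOf, SimpleGraph.fromRel_adj] at hxy
    obtain ⟨hne, hor⟩ := hxy
    refine ⟨hne, ?_⟩
    have hmem : toLex (x, y) ∈ G ∪ H ∨ toLex (y, x) ∈ G ∪ H := by tauto
    rcases hmem with hm | hm
    · have hlt : x < y := by simpa using hGH _ hm
      rwa [inf_eq_left.2 hlt.le, sup_eq_right.2 hlt.le]
    · have hlt : y < x := by simpa using hGH _ hm
      rwa [inf_eq_right.2 hlt.le, sup_eq_left.2 hlt.le]
  -- the vanishing along the cycle
  have h2 : 2 ≤ (toLst f p).length := by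
    rw [toLst_length]
    have := hp.three_le_length
    omega
  have hS0 : genProd k d n (wEdges v (toLst f p)) = 0 :=
    mainW _ _ v rfl h2 (toLst_last f p)
  obtain ⟨s, hs, he⟩ := canonListScale (k := k) (d := d) (wEdges v (toLst f p))
  have hC0 : genProd k d n ((wEdges v (toLst f p)).map canonE) = 0 :=
    hs.cancel he hS0
  -- the big product as a generator product
  set Lg : List (Bool × Fin n × Fin n) :=
    (G.sort (· ≤ ·)).map (fun e => ((true : Bool), ofLex e)) with hLg
  set Lh : List (Bool × Fin n × Fin n) :=
    (H.sort (· ≤ ·)).map (fun e => ((false : Bool), ofLex e)) with hLh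
  have hg' : gBMonomial k d n G = genProd k d n Lg := by
    rw [gBMonomial, hLg, genProd, List.map_map]; rfl
  have hh' : hBMonomial k d n H = genProd k d n Lh := by
    rw [hBMonomial, hLh, genProd, List.map_map]; rfl
  rw [hg', hh', ← genProd_append]
  refine genProd_eq_zero_of_subperm ?_ hC0
  refine List.Nodup.subperm ?_ ?_
  · -- nodup of the canonical cycle list
    have hmapsym : (((wEdges v (toLst f p)).map canonE).map (fun e => s(e.2.1, e.2.2)))
        = p.edges := by
      rw [List.map_map]
      have hcomp : ((fun e : Bool × Fin n × Fin n => s(e.2.1, e.2.2)) ∘ canonE)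
          = fun e : Bool × Fin n × Fin n => s(e.2.1, e.2.2) := funext canonE_sym2
      rw [hcomp, wEdges_toLst_sym2]
    exact List.Nodup.of_map _ (hmapsym ▸ hp.isCircuit.isTrail.edges_nodup)
  · -- each canonical cycle edge occurs in the big list
    intro e he
    rw [List.mem_map] at he
    obtain ⟨e0, he0, rfl⟩ := he
    obtain ⟨hadj0, hlbl0⟩ := mem_wEdges_toLst f p e0 he0
    obtain ⟨t, x, y⟩ := e0
    dsimp only at hadj0 hlbl0
    obtain ⟨hne, hmem⟩ := hadj hadj0
    have hcanon : canonE (t, x, y) = (t, x ⊓ y, x ⊔ y) := by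
      by_cases hy : y < x
      · simp [canonE, hy, inf_eq_right.2 hy.le, sup_eq_left.2 hy.le]
      · have hxy : x < y := lt_of_le_of_ne (not_lt.1 hy) hne
        simp [canonE, hy, inf_eq_left.2 hxy.le, sup_eq_right.2 hxy.le]
    rw [hcanon, List.mem_append]
    by_cases hGmem : toLex (x ⊓ y, x ⊔ y) ∈ G
    · left
      rw [hLg, List.mem_map]
      refine ⟨toLex (x ⊓ y, x ⊔ y), (Finset.mem_sort _).2 hGmem, ?_⟩
      have ht : t = true := by rw [hlbl0]; simp [hf, hGmem]
      simp [ht]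
    · right
      have hHmem : toLex (x ⊓ y, x ⊔ y) ∈ H := by
        rcases Finset.mem_union.1 hmem with h | h
        · exact absurd h hGmem
        · exact h
      rw [hLh, List.mem_map]
      refine ⟨toLex (x ⊓ y, x ⊔ y), (Finset.mem_sort _).2 hHmem, ?_⟩
      have ht : t = false := by rw [hlbl0]; simp [hf, hGmem]
      simp [ht]
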